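/- Invariance under cycle-bisimulation: let K_1 and K_2 be Kripke structures and B a cycle-bisimulation between them. Then for every pair (w_1, w_2) ∈ B and every Cycle-CTL* state formula φ, K_1, w_1 ⊨ φ if and only if K_2, w_2 ⊨ φ. In particular, K_1 ⊨ φ iff K_2 ⊨ φ for every Cycle-CTL* state formula φ. -/

import Mathlib

namespace CycleCTL

universe u v

/-- A Kripke structure over a set `AP` of atomic propositions. -/
structure Kripke (AP : Type) : Type (u + 1) where
  World : Type u
  init : World
  R : World → World → Prop
  label : World → Set AP
  serial : ∀ w, ∃ v, R w v

variable {AP : Type}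

/-- An (infinite) path of a Kripke structure. -/
def IsPath (K : Kripke.{u} AP) (π : ℕ → K.World) : Prop :=
  ∀ i, K.R (π i) (π (i + 1))

/-- A cycle: a path visiting its first world infinitely often. -/
def IsCycle (K : Kripke.{u} AP) (π : ℕ → K.World) : Prop :=
  IsPath K π ∧ ∀ i, ∃ j, i < j ∧ π j = π 0

mutual
  /-- State formulas of Cycle-CTL*. -/
  inductive StateForm (AP : Type) : Type where
    | atom : AP → StateForm AP
    | not  : StateForm AP → StateForm AP
    | and  : StateForm AP → StateForm AP → StateForm AP
    | or   : StateForm AP → StateForm AP → StateForm AP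
    | E    : PathForm AP → StateForm AP
    | A    : PathForm AP → StateForm AP
    | Ec   : PathForm AP → StateForm AP
    | Ac   : PathForm AP → StateForm AP
  /-- Path formulas of Cycle-CTL*. -/
  inductive PathForm (AP : Type) : Type where
    | state : StateForm AP → PathForm AP
    | not   : PathForm AP → PathForm AP
    | and   : PathForm AP → PathForm AP → PathForm AP
    | or    : PathForm AP → PathForm AP → PathForm AP
    | next  : PathForm AP → PathForm AP
    | untl  : PathForm AP → PathForm AP → PathForm AP
end

mutual
  /-- Satisfaction of a state formula at a world. -/
  def SatS (K : Kripke.{u} AP) : K.World → StateForm AP → Prop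
    | w, .atom p => p ∈ K.label w
    | w, .not φ => ¬ SatS K w φ
    | w, .and φ₁ φ₂ => SatS K w φ₁ ∧ SatS K w φ₂
    | w, .or φ₁ φ₂ => SatS K w φ₁ ∨ SatS K w φ₂
    | w, .E ψ => ∃ π, IsPath K π ∧ π 0 = w ∧ SatP K π 0 ψ
    | w, .A ψ => ∀ π, IsPath K π → π 0 = w → SatP K π 0 ψ
    | w, .Ec ψ => ∃ π, IsCycle K π ∧ π 0 = w ∧ SatP K π 0 ψ
    | w, .Ac ψ => ∀ π, IsCycle K π → π 0 = w → SatP K π 0 ψ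
  /-- Satisfaction of a path formula on a path at a position. -/
  def SatP (K : Kripke.{u} AP) : (ℕ → K.World) → ℕ → PathForm AP → Prop
    | π, i, .state φ => SatS K (π i) φ
    | π, i, .not ψ => ¬ SatP K π i ψ
    | π, i, .and ψ₁ ψ₂ => SatP K π i ψ₁ ∧ SatP K π i ψ₂
    | π, i, .or ψ₁ ψ₂ => SatP K π i ψ₁ ∨ SatP K π i ψ₂
    | π, i, .next ψ => SatP K π (i + 1) ψ
    | π, i, .untl ψ₁ ψ₂ => ∃ k, SatP K π (i + k) ψ₂ ∧ ∀ j < k, SatP K π (i + j) ψ₁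
end

/-- `K ⊨ φ` : satisfaction at the initial world. -/
def Sat (K : Kripke.{u} AP) (φ : StateForm AP) : Prop := SatS K K.init φ

/-- `⊤` as a path formula, abbreviating `p ∨ ¬p`. -/
def topP (p : AP) : PathForm AP := .or (.state (.atom p)) (.not (.state (.atom p)))

/-- `F ψ` abbreviates `⊤ U ψ`. -/
def FP (p : AP) (ψ : PathForm AP) : PathForm AP := .untl (topP p) ψ

/-- `G ψ` abbreviates `¬(⊤ U ¬ψ)`. -/
def GP (p : AP) (ψ : PathForm AP) : PathForm AP := .not (FP p (.not ψ))


/-- A cycle-bisimulation between two Kripke structures. -/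
def IsCycleBisim (K₁ : Kripke.{u} AP) (K₂ : Kripke.{v} AP)
    (B : K₁.World → K₂.World → Prop) : Prop :=
  B K₁.init K₂.init ∧
  ∀ w₁ w₂, B w₁ w₂ →
    (K₁.label w₁ = K₂.label w₂) ∧
    (∀ v₁, K₁.R w₁ v₁ → ∃ v₂, K₂.R w₂ v₂ ∧ B v₁ v₂) ∧
    (∀ v₂, K₂.R w₂ v₂ → ∃ v₁, K₁.R w₁ v₁ ∧ B v₁ v₂) ∧
    (∀ π₁, IsCycle K₁ π₁ → π₁ 0 = w₁ →
      ∃ π₂, IsCycle K₂ π₂ ∧ π₂ 0 = w₂ ∧ ∀ i, B (π₁ i) (π₂ i)) ∧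
    (∀ π₂, IsCycle K₂ π₂ → π₂ 0 = w₂ →
      ∃ π₁, IsCycle K₁ π₁ ∧ π₁ 0 = w₁ ∧ ∀ i, B (π₁ i) (π₂ i))

section Invariance

/-!
Induction on formulas, simultaneously for state formulas at `B`-related worlds and for path
formulas along pointwise `B`-related paths. Path quantifiers transfer because clauses (b)/(c)
lift a path step by step; such a lifted path need not return to its start, so the cycle
quantifiers need the cycle clauses (d)/(e) instead.
-/

theorem exists_lift_seq {α β : Type*} {r₁ : α → α → Prop} {r₂ : β → β → Prop}
    {S : α → β → Prop} (forth : ∀ a b, S a b → ∀ a', r₁ a a' → ∃ b', r₂ b b' ∧ S a' b')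
    {f : ℕ → α} (hf : ∀ n, r₁ (f n) (f (n + 1))) {b : β} (hb : S (f 0) b) :
    ∃ g : ℕ → β, (∀ n, r₂ (g n) (g (n + 1))) ∧ g 0 = b ∧ ∀ n, S (f n) (g n) := by
  choose next hnext hS using forth
  let g : ∀ n, {y : β // S (f n) y} := fun n =>
    Nat.rec ⟨b, hb⟩ (fun n y => ⟨next _ _ y.2 _ (hf n), hS _ _ y.2 _ (hf n)⟩) n
  exact ⟨fun n => (g n).1, fun n => hnext _ _ (g n).2 _ (hf n), rfl, fun n => (g n).2⟩

variable {K₁ : Kripke.{u} AP} {K₂ : Kripke.{v} AP} {B : K₁.World → K₂.World → Prop}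

def PathsMatch (B : K₁.World → K₂.World → Prop) (C₁ : (ℕ → K₁.World) → Prop)
    (C₂ : (ℕ → K₂.World) → Prop) (w₁ : K₁.World) (w₂ : K₂.World) : Prop :=
  (∀ π₁, C₁ π₁ → π₁ 0 = w₁ → ∃ π₂, C₂ π₂ ∧ π₂ 0 = w₂ ∧ ∀ i, B (π₁ i) (π₂ i)) ∧
  (∀ π₂, C₂ π₂ → π₂ 0 = w₂ → ∃ π₁, C₁ π₁ ∧ π₁ 0 = w₁ ∧ ∀ i, B (π₁ i) (π₂ i))

namespace PathsMatch

variable {C₁ : (ℕ → K₁.World) → Prop} {C₂ : (ℕ → K₂.World) → Prop} {w₁ : K₁.World}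
  {w₂ : K₂.World} {P₁ : (ℕ → K₁.World) → Prop} {P₂ : (ℕ → K₂.World) → Prop}

theorem exists_iff (hM : PathsMatch B C₁ C₂ w₁ w₂)
    (hP : ∀ π₁ π₂, (∀ i, B (π₁ i) (π₂ i)) → (P₁ π₁ ↔ P₂ π₂)) :
    (∃ π, C₁ π ∧ π 0 = w₁ ∧ P₁ π) ↔ ∃ π, C₂ π ∧ π 0 = w₂ ∧ P₂ π := by
  constructor
  · rintro ⟨π₁, hC, h0, hP₁⟩
    obtain ⟨π₂, hC₂, h₂0, hrel⟩ := hM.1 π₁ hC h0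
    exact ⟨π₂, hC₂, h₂0, (hP π₁ π₂ hrel).1 hP₁⟩
  · rintro ⟨π₂, hC, h0, hP₂⟩
    obtain ⟨π₁, hC₁, h₁0, hrel⟩ := hM.2 π₂ hC h0
    exact ⟨π₁, hC₁, h₁0, (hP π₁ π₂ hrel).2 hP₂⟩

theorem forall_iff (hM : PathsMatch B C₁ C₂ w₁ w₂)
    (hP : ∀ π₁ π₂, (∀ i, B (π₁ i) (π₂ i)) → (P₁ π₁ ↔ P₂ π₂)) :
    (∀ π, C₁ π → π 0 = w₁ → P₁ π) ↔ ∀ π, C₂ π → π 0 = w₂ → P₂ π := by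
  constructor
  · intro h π₂ hC h0
    obtain ⟨π₁, hC₁, h₁0, hrel⟩ := hM.2 π₂ hC h0
    exact (hP π₁ π₂ hrel).1 (h π₁ hC₁ h₁0)
  · intro h π₁ hC h0
    obtain ⟨π₂, hC₂, h₂0, hrel⟩ := hM.1 π₁ hC h0
    exact (hP π₁ π₂ hrel).2 (h π₂ hC₂ h₂0)

end PathsMatch

namespace IsCycleBisim

variable {w₁ : K₁.World} {w₂ : K₂.World}

theorem label_eq (hB : IsCycleBisim K₁ K₂ B) (hw : B w₁ w₂) : K₁.label w₁ = K₂.label w₂ :=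
  (hB.2 w₁ w₂ hw).1

theorem pathsMatch_cycle (hB : IsCycleBisim K₁ K₂ B) (hw : B w₁ w₂) :
    PathsMatch B (IsCycle K₁) (IsCycle K₂) w₁ w₂ :=
  (hB.2 w₁ w₂ hw).2.2.2

theorem pathsMatch_path (hB : IsCycleBisim K₁ K₂ B) (hw : B w₁ w₂) :
    PathsMatch B (IsPath K₁) (IsPath K₂) w₁ w₂ := by
  constructor
  · rintro π₁ hπ rfl
    exact exists_lift_seq (fun a b h => (hB.2 a b h).2.1) hπ hw
  · rintro π₂ hπ rfl
    exact exists_lift_seq (S := flip B) (fun b a h => (hB.2 a b h).2.2.1) hπ hw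

mutual

theorem satS_iff (hB : IsCycleBisim K₁ K₂ B) :
    ∀ (φ : StateForm AP) {w₁ w₂}, B w₁ w₂ → (SatS K₁ w₁ φ ↔ SatS K₂ w₂ φ)
  | .atom p, _, _, hw => by simp only [SatS, hB.label_eq hw]
  | .not φ, _, _, hw => not_congr (hB.satS_iff φ hw)
  | .and φ₁ φ₂, _, _, hw => and_congr (hB.satS_iff φ₁ hw) (hB.satS_iff φ₂ hw)
  | .or φ₁ φ₂, _, _, hw => or_congr (hB.satS_iff φ₁ hw) (hB.satS_iff φ₂ hw)
  | .E ψ, _, _, hw => (hB.pathsMatch_path hw).exists_iff fun _ _ h => hB.satP_iff ψ h 0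
  | .A ψ, _, _, hw => (hB.pathsMatch_path hw).forall_iff fun _ _ h => hB.satP_iff ψ h 0
  | .Ec ψ, _, _, hw => (hB.pathsMatch_cycle hw).exists_iff fun _ _ h => hB.satP_iff ψ h 0
  | .Ac ψ, _, _, hw => (hB.pathsMatch_cycle hw).forall_iff fun _ _ h => hB.satP_iff ψ h 0

theorem satP_iff (hB : IsCycleBisim K₁ K₂ B) :
    ∀ (ψ : PathForm AP) {π₁ π₂}, (∀ i, B (π₁ i) (π₂ i)) →
      ∀ i, (SatP K₁ π₁ i ψ ↔ SatP K₂ π₂ i ψ)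
  | .state φ, _, _, h, i => hB.satS_iff φ (h i)
  | .not ψ, _, _, h, i => not_congr (hB.satP_iff ψ h i)
  | .and ψ₁ ψ₂, _, _, h, i => and_congr (hB.satP_iff ψ₁ h i) (hB.satP_iff ψ₂ h i)
  | .or ψ₁ ψ₂, _, _, h, i => or_congr (hB.satP_iff ψ₁ h i) (hB.satP_iff ψ₂ h i)
  | .next ψ, _, _, h, i => hB.satP_iff ψ h (i + 1)
  | .untl ψ₁ ψ₂, _, _, h, i => exists_congr fun k =>
      and_congr (hB.satP_iff ψ₂ h (i + k)) (forall₂_congr fun j _ => hB.satP_iff ψ₁ h (i + j))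

end

end IsCycleBisim

end Invariance

/-- Cycle-CTL* is invariant under cycle-bisimulation: cycle-bisimilar pairs of
worlds satisfy the same state formulas; in particular, the two structures satisfy the same
state formulas. -/
theorem stmt6 {AP : Type} (K₁ : Kripke.{u} AP) (K₂ : Kripke.{v} AP)
    (B : K₁.World → K₂.World → Prop) (hB : IsCycleBisim K₁ K₂ B) :
    (∀ w₁ w₂, B w₁ w₂ → ∀ φ : StateForm AP, (SatS K₁ w₁ φ ↔ SatS K₂ w₂ φ)) ∧
    (∀ φ : StateForm AP, Sat K₁ φ ↔ Sat K₂ φ) :=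
  ⟨fun _ _ hw φ => hB.satS_iff φ hw, fun φ => hB.satS_iff φ hB.1⟩

end CycleCTL
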